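/- arXiv:2206.10174 — 5 statements merged into one kernel-verified Lean document; each statement's English description precedes it below -/
import Mathlib

section
/- Fix a coordinate (i,j) and let f ∈ ℝ^K be an arbitrary data vector (playing the role of F̃*_ij). Suppose D ≥ 0 satisfies Σ_{l>k}(Θ⋆_{k;ij} − Θ⋆_{l;ij})² ≤ D², and suppose the regularization parameters satisfy γ < 1/(2K·‖W‖_max) and 6‖f − Θ⋆_ij‖_∞ + 6γK‖W‖_max·D ≤ μ < (3/2)·Θ_min. Then the minimizer θ̂ of θ ↦ ‖θ − f‖₂² + μ‖θ‖₁ + γ‖GAθ‖₂² over ℝ^K is unique, satisfies supp(θ̂) = supp(Θ⋆_ij), and satisfies ‖θ̂ − Θ⋆_ij‖_∞ ≤ 2μ/3. -/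
/-!
The objective is the strongly convex, coercive term `‖θ - f‖₂²` plus convex terms, so it has
exactly one minimiser `x`. Moving `x` along the `k`-th coordinate changes the objective by
`(1 + γ c_k) r² + 2 g_k r + μ (|x_k + r| - |x_k|)`, where `c_k` is the weighted degree of `k` and
`g_k` half the `k`-th partial derivative of the smooth part; minimality forces `|g_k| ≤ μ/2`, and
`x_k = 0` as soon as `|(1 + γ c_k) x_k - g_k| ≤ μ/2`.

Writing `x = Θ + y`, the difference `(1 + γ c_k) y_k - g_k` consists of `f_k - Θ_k`, the variation
`γ (Aᵀ G² A Θ)_k` of the truth (at most `γ K ‖W‖_max D` by Cauchy–Schwarz) and the neighbour sum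
`γ Σ_{l ≠ k} W_kl y_l`, of size at most `γ c_k ‖y‖_∞`. At a coordinate where `|y_k| = ‖y‖_∞` the
`γ c_k` terms cancel, giving `‖y‖_∞ ≤ μ/2 + μ/6 = 2μ/3`. Since `γ c_k ≤ 1/2`, the same estimate
gives `x_k = 0` whenever `Θ_k = 0`, while `2μ/3 < Θ_min` keeps the other coordinates away from `0`.
-/

open Finset Filter

section Scalar

variable {a g μ x : ℝ}

lemma le_half_of_forall_quadratic_nonneg (ha : 0 < a) (hμ : 0 ≤ μ)
    (h : ∀ r, 0 ≤ a * r ^ 2 + 2 * g * r + μ * (|x + r| - |x|)) : g ≤ μ / 2 := by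
  by_contra! hg
  -- a step to the left on which `a r² + (2g - μ) r`, an upper bound for the expression, is `< 0`
  set r := -(2 * g - μ) / (2 * a) with hr_def
  have hr : r < 0 := div_neg_of_neg_of_pos (by linarith) (by linarith)
  have har : a * r = -(2 * g - μ) / 2 := by rw [hr_def]; field_simp
  have hkink : |x + r| - |x| ≤ -r := by
    have := abs_add_le x r
    rw [abs_of_neg hr] at this
    linarith
  nlinarith [h r, mul_le_mul_of_nonneg_left hkink hμ]

lemma abs_le_half_of_forall_quadratic_nonneg (ha : 0 < a) (hμ : 0 ≤ μ)
    (h : ∀ r, 0 ≤ a * r ^ 2 + 2 * g * r + μ * (|x + r| - |x|)) : |g| ≤ μ / 2 := by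
  refine abs_le.2 ⟨?_, le_half_of_forall_quadratic_nonneg ha hμ h⟩
  have h' : ∀ r, 0 ≤ a * r ^ 2 + 2 * -g * r + μ * (|-x + r| - |-x|) := fun r => by
    have := h (-r)
    rw [← abs_neg (x + -r), neg_add', sub_neg_eq_add, neg_sq] at this
    rw [abs_neg]
    linarith
  linarith [le_half_of_forall_quadratic_nonneg ha hμ h']

lemma eq_zero_of_forall_quadratic_nonneg (ha : 0 < a)
    (h : ∀ r, 0 ≤ a * r ^ 2 + 2 * g * r + μ * (|x + r| - |x|)) (hx : |a * x - g| ≤ μ / 2) :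
    x = 0 := by
  have h0 := h (-x)
  rw [add_neg_cancel, abs_zero, zero_sub, neg_sq] at h0
  have hcross : (a * x - g) * x ≤ μ / 2 * |x| := by
    calc (a * x - g) * x ≤ |(a * x - g) * x| := le_abs_self _
      _ = |a * x - g| * |x| := abs_mul _ _
      _ ≤ μ / 2 * |x| := mul_le_mul_of_nonneg_right hx (abs_nonneg x)
  have hx2 : a * x ^ 2 ≤ 0 := by nlinarith
  exact pow_eq_zero_iff two_ne_zero |>.1
    (le_antisymm (nonpos_of_mul_nonpos_right hx2 ha) (sq_nonneg x))

end Scalar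

section FusedObjective

variable {ι E : Type*} [Fintype E] (s t : E → ι) (w : E → ℝ)

def edgeForm (x y : ι → ℝ) : ℝ :=
  ∑ e, w e * ((x (s e) - x (t e)) * (y (s e) - y (t e)))

/-- With the pairs `k < l` as edges and weights `W k l`, this is the paper's `‖G A θ‖₂²`. -/
def edgeEnergy (θ : ι → ℝ) : ℝ :=
  ∑ e, w e * (θ (s e) - θ (t e)) ^ 2

def edgeDegree [DecidableEq ι] (k : ι) : ℝ :=
  edgeEnergy s t w (Pi.single k 1)

def fusedObjective [Fintype ι] (f : ι → ℝ) (μ γ : ℝ) (θ : ι → ℝ) : ℝ :=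
  (∑ k, (θ k - f k) ^ 2) + μ * ∑ k, |θ k| + γ * edgeEnergy s t w θ

def halfSmoothGrad [DecidableEq ι] (f : ι → ℝ) (γ : ℝ) (x : ι → ℝ) (k : ι) : ℝ :=
  x k - f k + γ * edgeForm s t w x (Pi.single k 1)

variable {s t w}

lemma edgeForm_sub_left (x y z : ι → ℝ) :
    edgeForm s t w (x - y) z = edgeForm s t w x z - edgeForm s t w y z := by
  simp only [edgeForm, ← sum_sub_distrib, Pi.sub_apply]
  exact sum_congr rfl fun e _ => by ring

lemma edgeEnergy_add_smul (x v : ι → ℝ) (r : ℝ) :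
    edgeEnergy s t w (x + r • v) =
      edgeEnergy s t w x + 2 * r * edgeForm s t w x v + r ^ 2 * edgeEnergy s t w v := by
  simp only [edgeEnergy, edgeForm, mul_sum, ← sum_add_distrib, Pi.add_apply, Pi.smul_apply,
    smul_eq_mul]
  exact sum_congr rfl fun e _ => by ring

lemma edgeEnergy_nonneg (hw : ∀ e, 0 ≤ w e) (θ : ι → ℝ) : 0 ≤ edgeEnergy s t w θ :=
  sum_nonneg fun e _ => mul_nonneg (hw e) (sq_nonneg _)

lemma edgeEnergy_midpoint_le (hw : ∀ e, 0 ≤ w e) (u v : ι → ℝ) :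
    edgeEnergy s t w (fun k => (u k + v k) / 2) ≤
      (edgeEnergy s t w u + edgeEnergy s t w v) / 2 := by
  simp only [edgeEnergy, sum_div, ← sum_add_distrib]
  refine sum_le_sum fun e _ => ?_
  nlinarith [mul_nonneg (hw e) (sq_nonneg (u (s e) - u (t e) - (v (s e) - v (t e))))]

lemma abs_edgeDegree_mul_sub_edgeForm_le [DecidableEq ι] (hw : ∀ e, 0 ≤ w e) {y : ι → ℝ}
    {M : ℝ} (hy : ∀ j, |y j| ≤ M) (k : ι) :
    |edgeDegree s t w k * y k - edgeForm s t w y (Pi.single k 1)| ≤ edgeDegree s t w k * M := by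
  simp only [edgeDegree, edgeEnergy, edgeForm, sum_mul, ← sum_sub_distrib]
  refine (abs_sum_le_sum_abs _ _).trans (sum_le_sum fun e _ => ?_)
  have hwy : ∀ j, |w e * y j| ≤ w e * M := fun j => by
    rw [abs_mul, abs_of_nonneg (hw e)]; exact mul_le_mul_of_nonneg_left (hy j) (hw e)
  by_cases hs : s e = k <;> by_cases ht : t e = k <;> simp [hs, ht]
  · simpa [mul_sub] using hwy (t e)
  · simpa [mul_sub] using hwy (s e)

end FusedObjective

section Incidence

variable {ι E : Type*} [DecidableEq ι] [Fintype E] {s t : E → ι}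

lemma sq_single_sub_single_le (k a b : ι) :
    ((Pi.single k 1 : ι → ℝ) a - (Pi.single k 1 : ι → ℝ) b) ^ 2 ≤
      if a = k ∨ b = k then 1 else 0 := by
  by_cases ha : a = k <;> by_cases hb : b = k <;> simp [ha, hb]

lemma edgeDegree_le_mul_card {w : E → ℝ} {G : ℝ} (hw : ∀ e, 0 ≤ w e ∧ w e ≤ G) (k : ι) :
    edgeDegree s t w k ≤ G * #{e | s e = k ∨ t e = k} := by
  calc edgeDegree s t w k ≤ ∑ e, w e * if s e = k ∨ t e = k then 1 else 0 :=
        sum_le_sum fun e _ => mul_le_mul_of_nonneg_left (sq_single_sub_single_le k _ _) (hw e).1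
    _ = ∑ e ∈ {e | s e = k ∨ t e = k}, w e := by
      simp only [mul_ite, mul_one, mul_zero, sum_ite, sum_const_zero, add_zero]
    _ ≤ G * #{e | s e = k ∨ t e = k} := by
      rw [mul_comm, ← nsmul_eq_mul, ← sum_const]
      exact sum_le_sum fun e _ => (hw e).2

lemma sq_edgeForm_single_le {w : E → ℝ} {G : ℝ} (hw : ∀ e, |w e| ≤ G) (θ : ι → ℝ) (k : ι) :
    edgeForm s t w θ (Pi.single k 1) ^ 2 ≤
      (∑ e, (θ (s e) - θ (t e)) ^ 2) * (G ^ 2 * #{e | s e = k ∨ t e = k}) := by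
  set δ : ι → ℝ := Pi.single k 1
  have hdeg := edgeDegree_le_mul_card (s := s) (t := t) (w := fun e => w e ^ 2) (G := G ^ 2)
    (fun e => ⟨sq_nonneg _, sq_le_sq.2 ((hw e).trans (le_abs_self G))⟩) k
  calc _ = (∑ e, (θ (s e) - θ (t e)) * (w e * (δ (s e) - δ (t e)))) ^ 2 := by
        simp only [edgeForm]; congr 1; exact sum_congr rfl fun e _ => by ring
    _ ≤ _ := (sum_mul_sq_le_sq_mul_sq _ _ _).trans
        (mul_le_mul_of_nonneg_left ?_ (sum_nonneg fun e _ => sq_nonneg _))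
  simpa only [edgeDegree, edgeEnergy, mul_pow] using hdeg

end Incidence

section Minimizer

variable {ι E : Type*} [Fintype ι] [Fintype E] {s t : E → ι} {w : E → ℝ} {f : ι → ℝ} {μ γ : ℝ}

lemma sum_add_mul_single [DecidableEq ι] (g : ι → ℝ → ℝ) (x : ι → ℝ) (k : ι) (r : ℝ) :
    ∑ j, g j (x j + r * (Pi.single k 1 : ι → ℝ) j) =
      ∑ j, g j (x j) + (g k (x k + r) - g k (x k)) := by
  rw [← sub_eq_iff_eq_add', ← sum_sub_distrib, sum_eq_single k]
  · simp
  · intro j _ hj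
    simp [Pi.single_eq_of_ne hj]
  · simp

lemma fusedObjective_add_smul_single [DecidableEq ι] (x : ι → ℝ) (k : ι) (r : ℝ) :
    fusedObjective s t w f μ γ (x + r • Pi.single k 1) = fusedObjective s t w f μ γ x +
      ((1 + γ * edgeDegree s t w k) * r ^ 2
        + 2 * halfSmoothGrad s t w f γ x k * r + μ * (|x k + r| - |x k|)) := by
  have hsq := sum_add_mul_single (fun j u => (u - f j) ^ 2) x k r
  have habs := sum_add_mul_single (fun _ u => |u|) x k r
  simp only [fusedObjective, edgeEnergy_add_smul, edgeDegree, halfSmoothGrad, Pi.add_apply,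
    Pi.smul_apply, smul_eq_mul, hsq, habs]
  ring

lemma sum_sq_sub_le_fusedObjective (hw : ∀ e, 0 ≤ w e) (hμ : 0 ≤ μ) (hγ : 0 ≤ γ)
    (θ : ι → ℝ) : ∑ k, (θ k - f k) ^ 2 ≤ fusedObjective s t w f μ γ θ := by
  have := mul_nonneg hμ (sum_nonneg fun k (_ : k ∈ univ) => abs_nonneg (θ k))
  have := mul_nonneg hγ (edgeEnergy_nonneg (s := s) (t := t) hw θ)
  rw [fusedObjective]
  linarith

lemma continuous_fusedObjective : Continuous (fusedObjective s t w f μ γ) := by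
  unfold fusedObjective edgeEnergy
  fun_prop

lemma exists_forall_fusedObjective_le (hw : ∀ e, 0 ≤ w e) (hμ : 0 ≤ μ) (hγ : 0 ≤ γ) :
    ∃ x, ∀ θ, fusedObjective s t w f μ γ x ≤ fusedObjective s t w f μ γ θ := by
  refine continuous_fusedObjective.exists_forall_le <|
    tendsto_atTop_mono (fun θ => ?_) ((tendsto_pow_atTop two_ne_zero).comp
      (tendsto_dist_right_cocompact_atTop f))
  refine le_trans ?_ (sum_sq_sub_le_fusedObjective hw hμ hγ θ)
  refine (Real.le_sqrt dist_nonneg (sum_nonneg fun k _ => sq_nonneg _)).1 <|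
    (dist_pi_le_iff (Real.sqrt_nonneg _)).2 fun k => ?_
  rw [Real.dist_eq, ← Real.sqrt_sq_eq_abs]
  exact Real.sqrt_le_sqrt (single_le_sum (f := fun k => (θ k - f k) ^ 2)
    (fun k _ => sq_nonneg _) (mem_univ k))

lemma fusedObjective_midpoint_le (hw : ∀ e, 0 ≤ w e) (hμ : 0 ≤ μ) (hγ : 0 ≤ γ)
    (u v : ι → ℝ) :
    fusedObjective s t w f μ γ (fun k => (u k + v k) / 2) ≤
      (fusedObjective s t w f μ γ u + fusedObjective s t w f μ γ v) / 2
        - (∑ k, (u k - v k) ^ 2) / 4 := by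
  have hsq : ∑ k, ((u k + v k) / 2 - f k) ^ 2 =
      ((∑ k, (u k - f k) ^ 2) + ∑ k, (v k - f k) ^ 2) / 2 - (∑ k, (u k - v k) ^ 2) / 4 := by
    simp only [sum_div, ← sum_add_distrib, ← sum_sub_distrib]
    exact sum_congr rfl fun k _ => by ring
  have habs : ∑ k, |(u k + v k) / 2| ≤ ((∑ k, |u k|) + ∑ k, |v k|) / 2 := by
    simp only [sum_div, ← sum_add_distrib]
    refine sum_le_sum fun k _ => ?_
    rw [abs_div, abs_two]
    linarith [abs_add_le (u k) (v k)]
  have := mul_le_mul_of_nonneg_left habs hμ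
  have := mul_le_mul_of_nonneg_left (edgeEnergy_midpoint_le (s := s) (t := t) hw u v) hγ
  simp only [fusedObjective, hsq]
  linarith

lemma eq_of_forall_fusedObjective_le (hw : ∀ e, 0 ≤ w e) (hμ : 0 ≤ μ) (hγ : 0 ≤ γ)
    {u v : ι → ℝ} (hu : ∀ θ, fusedObjective s t w f μ γ u ≤ fusedObjective s t w f μ γ θ)
    (hv : ∀ θ, fusedObjective s t w f μ γ v ≤ fusedObjective s t w f μ γ θ) : u = v := by
  have hmid := fusedObjective_midpoint_le (s := s) (t := t) (f := f) hw hμ hγ u v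
  have hdist : ∑ k, (u k - v k) ^ 2 ≤ 0 := by linarith [hu v, hv (fun k => (u k + v k) / 2)]
  funext k
  have := (sum_eq_zero_iff_of_nonneg fun j _ => sq_nonneg (u j - v j)).1
    (le_antisymm hdist (sum_nonneg fun j _ => sq_nonneg _)) k (mem_univ k)
  exact sub_eq_zero.1 (pow_eq_zero_iff two_ne_zero |>.1 this)

end Minimizer

section Guarantee

variable {ι E : Type*} [DecidableEq ι] [Fintype E] {s t : E → ι} {w : E → ℝ} {f : ι → ℝ}
  {μ γ : ℝ}

lemma one_add_mul_edgeDegree_pos (hw : ∀ e, 0 ≤ w e) (hγ : 0 ≤ γ) (k : ι) :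
    0 < 1 + γ * edgeDegree s t w k := by
  have := mul_nonneg hγ (edgeEnergy_nonneg (s := s) (t := t) hw (Pi.single k 1))
  rw [edgeDegree]
  linarith

lemma abs_one_add_mul_sub_halfSmoothGrad_le (hw : ∀ e, 0 ≤ w e) (hγ : 0 ≤ γ) {x Θ : ι → ℝ}
    {M : ℝ} (hM : ∀ j, |x j - Θ j| ≤ M) (k : ι) :
    |(1 + γ * edgeDegree s t w k) * (x k - Θ k) - halfSmoothGrad s t w f γ x k| ≤
      γ * edgeDegree s t w k * M + (|f k - Θ k| + γ * |edgeForm s t w Θ (Pi.single k 1)|) := by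
  have hneigh := abs_edgeDegree_mul_sub_edgeForm_le (s := s) (t := t) (y := x - Θ) hw hM k
  rw [edgeForm_sub_left, Pi.sub_apply] at hneigh
  set c := edgeDegree s t w k
  set Bx := edgeForm s t w x (Pi.single k 1)
  set BΘ := edgeForm s t w Θ (Pi.single k 1)
  calc _ = |γ * (c * (x k - Θ k) - (Bx - BΘ)) + (f k - Θ k) - γ * BΘ| := by
        rw [halfSmoothGrad]; congr 1; ring
    _ ≤ γ * |c * (x k - Θ k) - (Bx - BΘ)| + |f k - Θ k| + γ * |BΘ| := by
      refine (abs_sub _ _).trans (add_le_add ((abs_add_le _ _).trans ?_) ?_) <;>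
        simp only [abs_mul, abs_of_nonneg hγ, le_refl]
    _ ≤ _ := by nlinarith [mul_le_mul_of_nonneg_left hneigh hγ]

variable [Fintype ι]

lemma forall_quadratic_nonneg_of_forall_fusedObjective_le {x : ι → ℝ}
    (hx : ∀ θ, fusedObjective s t w f μ γ x ≤ fusedObjective s t w f μ γ θ) (k : ι) (r : ℝ) :
    0 ≤ (1 + γ * edgeDegree s t w k) * r ^ 2 + 2 * halfSmoothGrad s t w f γ x k * r
      + μ * (|x k + r| - |x k|) := by
  have := hx (x + r • Pi.single k 1)
  rw [fusedObjective_add_smul_single] at this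
  linarith

lemma abs_sub_le_of_forall_fusedObjective_le (hw : ∀ e, 0 ≤ w e) (hμ : 0 ≤ μ) (hγ : 0 ≤ γ)
    {x Θ : ι → ℝ} (hx : ∀ θ, fusedObjective s t w f μ γ x ≤ fusedObjective s t w f μ γ θ)
    (hΘ : ∀ k, |f k - Θ k| + γ * |edgeForm s t w Θ (Pi.single k 1)| ≤ μ / 6) (k : ι) :
    |x k - Θ k| ≤ 2 * μ / 3 := by
  obtain ⟨k₀, -, hk₀⟩ := exists_max_image univ (fun j => |x j - Θ j|) ⟨k, mem_univ k⟩
  have hM : ∀ j, |x j - Θ j| ≤ |x k₀ - Θ k₀| := fun j => hk₀ j (mem_univ j)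
  refine (hM k).trans ?_
  have ha := one_add_mul_edgeDegree_pos (s := s) (t := t) hw hγ k₀
  have hgrad := abs_le_half_of_forall_quadratic_nonneg ha hμ
    (forall_quadratic_nonneg_of_forall_fusedObjective_le hx k₀)
  have hres := abs_one_add_mul_sub_halfSmoothGrad_le (s := s) (t := t) (f := f) hw hγ hM k₀
  have htri := abs_sub_abs_le_abs_sub ((1 + γ * edgeDegree s t w k₀) * (x k₀ - Θ k₀))
    (halfSmoothGrad s t w f γ x k₀)
  rw [abs_mul, abs_of_pos ha] at htri
  linarith [hΘ k₀]

lemma eq_zero_of_forall_fusedObjective_le (hw : ∀ e, 0 ≤ w e) (hμ : 0 ≤ μ) (hγ : 0 ≤ γ)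
    {x Θ : ι → ℝ} (hx : ∀ θ, fusedObjective s t w f μ γ x ≤ fusedObjective s t w f μ γ θ)
    (hΘ : ∀ k, |f k - Θ k| + γ * |edgeForm s t w Θ (Pi.single k 1)| ≤ μ / 6) {k : ι}
    (hdeg : γ * edgeDegree s t w k ≤ 1 / 2) (hΘk : Θ k = 0) : x k = 0 := by
  refine eq_zero_of_forall_quadratic_nonneg (one_add_mul_edgeDegree_pos hw hγ k)
    (forall_quadratic_nonneg_of_forall_fusedObjective_le hx k) ?_
  calc _ = |(1 + γ * edgeDegree s t w k) * (x k - Θ k) - halfSmoothGrad s t w f γ x k| := by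
        rw [hΘk, sub_zero]
    _ ≤ γ * edgeDegree s t w k * (2 * μ / 3)
          + (|f k - Θ k| + γ * |edgeForm s t w Θ (Pi.single k 1)|) :=
      abs_one_add_mul_sub_halfSmoothGrad_le hw hγ
        (abs_sub_le_of_forall_fusedObjective_le hw hμ hγ hx hΘ) k
    _ ≤ μ / 2 := by nlinarith [hΘ k, mul_le_mul_of_nonneg_right hdeg hμ]

end Guarantee

section CompleteGraph

variable {K : ℕ} {W : Fin K → Fin K → ℝ} {Wmax : ℝ}

lemma card_incident_pairs_le (k : Fin K) :
    #{p : {p : Fin K × Fin K // p.1 < p.2} | p.val.1 = k ∨ p.val.2 = k} ≤ K := by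
  calc _ ≤ #(univ : Finset (Fin K)) := by
        refine card_le_card_of_injOn (fun p => if p.val.1 = k then p.val.2 else p.val.1)
          (fun _ _ => mem_coe.2 (mem_univ _)) ?_
        rintro ⟨⟨a, b⟩, hab⟩ hp ⟨⟨c, d⟩, hcd⟩ hq heq
        simp only [coe_filter, mem_univ, true_and, Set.mem_ofPred_eq] at hp hq heq
        simp only [Subtype.mk.injEq, Prod.mk.injEq]
        split_ifs at heq <;> simp only [Fin.ext_iff, Fin.lt_def] at * <;> omega
    _ = K := by simp

lemma edgeDegree_pairs_le (hWpos : ∀ k l, 0 ≤ W k l) (hWmax : ∀ k l, |W k l| ≤ Wmax)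
    (k : Fin K) :
    edgeDegree (fun p : {p : Fin K × Fin K // p.1 < p.2} => p.val.1) (fun p => p.val.2)
      (fun p => W p.val.1 p.val.2) k ≤ K * Wmax := by
  have hWmax0 : 0 ≤ Wmax := (abs_nonneg _).trans (hWmax k k)
  calc _ ≤ Wmax * #{p : {p : Fin K × Fin K // p.1 < p.2} | p.val.1 = k ∨ p.val.2 = k} :=
        edgeDegree_le_mul_card (fun p => ⟨hWpos _ _, (le_abs_self _).trans (hWmax _ _)⟩) k
    _ ≤ Wmax * K := mul_le_mul_of_nonneg_left (by exact_mod_cast card_incident_pairs_le k) hWmax0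
    _ = K * Wmax := mul_comm _ _

lemma abs_edgeForm_pairs_single_le (hWmax : ∀ k l, |W k l| ≤ Wmax) {Θ : Fin K → ℝ} {D : ℝ}
    (hD0 : 0 ≤ D)
    (hD : ∑ p : {p : Fin K × Fin K // p.1 < p.2}, (Θ p.val.1 - Θ p.val.2) ^ 2 ≤ D ^ 2)
    (k : Fin K) :
    |edgeForm (fun p : {p : Fin K × Fin K // p.1 < p.2} => p.val.1) (fun p => p.val.2)
      (fun p => W p.val.1 p.val.2) Θ (Pi.single k 1)| ≤ K * Wmax * D := by
  have hWmax0 : 0 ≤ Wmax := (abs_nonneg _).trans (hWmax k k)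
  have hK : (1 : ℝ) ≤ K := by exact_mod_cast k.pos
  have hcard : (#{p : {p : Fin K × Fin K // p.1 < p.2} | p.val.1 = k ∨ p.val.2 = k} : ℝ) ≤ K := by
    exact_mod_cast card_incident_pairs_le k
  refine abs_le_of_sq_le_sq ?_ (by positivity)
  calc _ ≤ D ^ 2 * (Wmax ^ 2 * K) := (sq_edgeForm_single_le (fun p => hWmax _ _) Θ k).trans
        (mul_le_mul hD (mul_le_mul_of_nonneg_left hcard (sq_nonneg _)) (by positivity)
          (sq_nonneg _))
    _ = (Wmax * D) ^ 2 * K := by ring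
    _ ≤ (Wmax * D) ^ 2 * K ^ 2 :=
        mul_le_mul_of_nonneg_left (le_self_pow₀ hK two_ne_zero) (sq_nonneg _)
    _ = (K * Wmax * D) ^ 2 := by ring

end CompleteGraph

theorem deterministic_guarantee_smooth_general
    (K : ℕ) (W : Fin K → Fin K → ℝ)
    (hWpos : ∀ k l, 0 ≤ W k l)
    (Wmax : ℝ) (hWmax_ub : ∀ k l, |W k l| ≤ Wmax)
    (Θ : Fin K → ℝ) (f : Fin K → ℝ)
    (D : ℝ) (hD0 : 0 ≤ D)
    (hD : ∑ p : {p : Fin K × Fin K // p.1 < p.2},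
        (Θ p.val.1 - Θ p.val.2) ^ 2 ≤ D ^ 2)
    (Θmin : ℝ)
    (hΘmin : ∀ k, Θ k ≠ 0 → Θmin ≤ |Θ k|)
    (μ γ : ℝ)
    (hγ0 : 0 ≤ γ) (hγ : γ < 1 / (2 * K * Wmax))
    (hμ_lb : ∀ k, 6 * |f k - Θ k| + 6 * γ * K * Wmax * D ≤ μ)
    (hμ_ub : μ < 3 / 2 * Θmin) :
    ∃ θh : Fin K → ℝ,
      (∀ θ : Fin K → ℝ,
        (∑ k, (θh k - f k) ^ 2) + μ * ∑ k, |θh k| +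
          γ * ∑ p : {p : Fin K × Fin K // p.1 < p.2},
            W p.val.1 p.val.2 * (θh p.val.1 - θh p.val.2) ^ 2 ≤
        (∑ k, (θ k - f k) ^ 2) + μ * ∑ k, |θ k| +
          γ * ∑ p : {p : Fin K × Fin K // p.1 < p.2},
            W p.val.1 p.val.2 * (θ p.val.1 - θ p.val.2) ^ 2) ∧
      (∀ θ' : Fin K → ℝ,
        (∀ θ : Fin K → ℝ,
          (∑ k, (θ' k - f k) ^ 2) + μ * ∑ k, |θ' k| +
            γ * ∑ p : {p : Fin K × Fin K // p.1 < p.2},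
              W p.val.1 p.val.2 * (θ' p.val.1 - θ' p.val.2) ^ 2 ≤
          (∑ k, (θ k - f k) ^ 2) + μ * ∑ k, |θ k| +
            γ * ∑ p : {p : Fin K × Fin K // p.1 < p.2},
              W p.val.1 p.val.2 * (θ p.val.1 - θ p.val.2) ^ 2) → θ' = θh) ∧
      (∀ k, θh k ≠ 0 ↔ Θ k ≠ 0) ∧
      (∀ k, |θh k - Θ k| ≤ 2 * μ / 3) := by
  have hKW : 0 < 2 * K * Wmax := one_div_pos.1 (hγ0.trans_lt hγ)
  have hγKW : γ * (K * Wmax) < 1 / 2 := by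
    rw [lt_div_iff₀ hKW] at hγ; linarith
  obtain ⟨k₀⟩ : Nonempty (Fin K) := ⟨⟨0, Nat.pos_of_ne_zero (by rintro rfl; simp at hKW)⟩⟩
  let s (p : {p : Fin K × Fin K // p.1 < p.2}) := p.val.1
  let t (p : {p : Fin K × Fin K // p.1 < p.2}) := p.val.2
  let w (p : {p : Fin K × Fin K // p.1 < p.2}) := W p.val.1 p.val.2
  have hw (p) : 0 ≤ w p := hWpos _ _
  have hdeg (k : Fin K) : γ * edgeDegree s t w k ≤ 1 / 2 :=
    (mul_le_mul_of_nonneg_left (edgeDegree_pairs_le hWpos hWmax_ub k) hγ0).trans hγKW.le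
  have hΘ (k : Fin K) : |f k - Θ k| + γ * |edgeForm s t w Θ (Pi.single k 1)| ≤ μ / 6 := by
    nlinarith [hμ_lb k,
      mul_le_mul_of_nonneg_left (abs_edgeForm_pairs_single_le hWmax_ub hD0 hD k) hγ0]
  have hμ0 : 0 ≤ μ := by
    linarith [(add_nonneg (abs_nonneg _) (mul_nonneg hγ0 (abs_nonneg _))).trans (hΘ k₀)]
  obtain ⟨x, hx⟩ := exists_forall_fusedObjective_le (s := s) (t := t) (f := f) hw hμ0 hγ0
  have herr := abs_sub_le_of_forall_fusedObjective_le hw hμ0 hγ0 hx hΘ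
  refine ⟨x, hx, fun θ' hθ' => eq_of_forall_fusedObjective_le hw hμ0 hγ0 hθ' hx,
    fun k => ⟨mt (eq_zero_of_forall_fusedObjective_le hw hμ0 hγ0 hx hΘ (hdeg k)), ?_⟩, herr⟩
  intro hΘk hxk
  have := herr k
  rw [hxk, zero_sub, abs_neg] at this
  linarith [hΘmin k hΘk]

/-- deterministic guarantee, smoothly-changing case: if
`γ < 1/(2K‖W‖_max)` and `6‖f − Θ⋆‖_∞ + 6γK‖W‖_max D ≤ μ < (3/2)Θ_min`, then the minimizer
of `θ ↦ ‖θ − f‖₂² + μ‖θ‖₁ + γ‖GAθ‖₂²` is unique, has the same support as `Θ⋆`, and is within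
`2μ/3` of `Θ⋆` in the sup-norm. -/
theorem deterministic_guarantee_smooth
    (K : ℕ) (W : Fin K → Fin K → ℝ)
    (hWsymm : ∀ k l, W k l = W l k) (hWpos : ∀ k l, 0 ≤ W k l)
    (Wmax : ℝ) (hWmax_ub : ∀ k l, |W k l| ≤ Wmax) (hWmax_ex : ∃ k l, |W k l| = Wmax)
    (Θ : Fin K → ℝ) (f : Fin K → ℝ)
    (D : ℝ) (hD0 : 0 ≤ D)
    (hD : ∑ p : {p : Fin K × Fin K // p.1 < p.2},
        (Θ p.val.1 - Θ p.val.2) ^ 2 ≤ D ^ 2)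
    (Θmin : ℝ) (hΘmin_pos : 0 < Θmin)
    (hΘmin : ∀ k, Θ k ≠ 0 → Θmin ≤ |Θ k|)
    (μ γ : ℝ)
    (hγ0 : 0 ≤ γ) (hγ : γ < 1 / (2 * K * Wmax))
    (hμ_lb : ∀ k, 6 * |f k - Θ k| + 6 * γ * K * Wmax * D ≤ μ)
    (hμ_ub : μ < 3 / 2 * Θmin) :
    ∃ θh : Fin K → ℝ,
      (∀ θ : Fin K → ℝ,
        (∑ k, (θh k - f k) ^ 2) + μ * ∑ k, |θh k| +
          γ * ∑ p : {p : Fin K × Fin K // p.1 < p.2},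
            W p.val.1 p.val.2 * (θh p.val.1 - θh p.val.2) ^ 2 ≤
        (∑ k, (θ k - f k) ^ 2) + μ * ∑ k, |θ k| +
          γ * ∑ p : {p : Fin K × Fin K // p.1 < p.2},
            W p.val.1 p.val.2 * (θ p.val.1 - θ p.val.2) ^ 2) ∧
      (∀ θ' : Fin K → ℝ,
        (∀ θ : Fin K → ℝ,
          (∑ k, (θ' k - f k) ^ 2) + μ * ∑ k, |θ' k| +
            γ * ∑ p : {p : Fin K × Fin K // p.1 < p.2},
              W p.val.1 p.val.2 * (θ' p.val.1 - θ' p.val.2) ^ 2 ≤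
          (∑ k, (θ k - f k) ^ 2) + μ * ∑ k, |θ k| +
            γ * ∑ p : {p : Fin K × Fin K // p.1 < p.2},
              W p.val.1 p.val.2 * (θ p.val.1 - θ p.val.2) ^ 2) → θ' = θh) ∧
      (∀ k, θh k ≠ 0 ↔ Θ k ≠ 0) ∧
      (∀ k, |θh k - Θ k| ≤ 2 * μ / 3) :=
  deterministic_guarantee_smooth_general K W hWpos Wmax hWmax_ub Θ f D hD0 hD Θmin hΘmin μ γ hγ0 hγ
    hμ_lb hμ_ub
end

section
/- Let M = I_K + γAᵀGᵀGA with q = 2, and let C be any matrix with CᵀC = M. If 0 ≤ γ < 1/(2K·‖W‖_max), then for every subset S ⊆ {1,…,K} and every j ∉ S, the mutual incoherency bound ‖(C_Sᵀ C_S)⁻¹ C_Sᵀ C_j‖₁ ≤ 1/2 holds, where C_S denotes the submatrix of columns of C indexed by S and C_j the j-th column of C. -/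
open scoped Classical
open Matrix

/-- The pair-difference matrix `A`: its rows are indexed by pairs `(k,l)` with `k < l`,
with `A_{(k,l),k} = 1`, `A_{(k,l),l} = -1`, and all other entries `0`. -/
noncomputable def pairDiffMatrix (K : ℕ) :
    Matrix {p : Fin K × Fin K // p.1 < p.2} (Fin K) ℝ :=
  Matrix.of fun p m => if m = p.val.1 then 1 else if m = p.val.2 then -1 else 0

/-- The diagonal weight matrix `G` for `q = 2`, with diagonal entries `√(W_{kl})`. -/
noncomputable def weightDiagSqrt (K : ℕ) (W : Fin K → Fin K → ℝ) :
    Matrix {p : Fin K × Fin K // p.1 < p.2} {p : Fin K × Fin K // p.1 < p.2} ℝ :=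
  Matrix.diagonal fun p => Real.sqrt (W p.val.1 p.val.2)

/-!
Write `M = CᵀC = 1 + γ L`, with `L = AᵀGᵀGA` the weighted graph Laplacian. Since `L = (GA)ᵀ(GA)`
is positive semidefinite, so is every principal submatrix of `M - 1`; thus `N = C_SᵀC_S = M_SS`
dominates the identity, and `x = N⁻¹ b` satisfies `‖x‖₂ ≤ ‖b‖₂`. The vector `b = C_SᵀC_j = M_{S,j}`
consists of off-diagonal entries `-γ W_{s,j}` of `M`, so `‖x‖₁ ≤ √|S| ‖x‖₂ ≤ |S| γ ‖W‖_max`,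
which is below `1/2` because `|S| ≤ K`.
-/

section InverseBound

variable {ι : Type*} [Fintype ι] [DecidableEq ι]

theorem Matrix.dotProduct_self_inv_mulVec_le {N : Matrix ι ι ℝ} (hN : (N - 1).PosSemidef)
    (b : ι → ℝ) : N⁻¹ *ᵥ b ⬝ᵥ N⁻¹ *ᵥ b ≤ b ⬝ᵥ b := by
  set x := N⁻¹ *ᵥ b
  have hNpos : N.PosDef := by simpa using PosDef.one.add_posSemidef hN
  have hNx : N *ᵥ x = b := by
    rw [mulVec_mulVec, mul_nonsing_inv _ ((isUnit_iff_isUnit_det N).mp hNpos.isUnit),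
      one_mulVec]
  have hxx : x ⬝ᵥ x ≤ x ⬝ᵥ b := by
    simpa [sub_mulVec, dotProduct_sub, hNx] using hN.dotProduct_mulVec_nonneg x
  -- `x⬝x ≤ x⬝b ≤ (x⬝x + b⬝b) / 2`, the second step being `0 ≤ ‖x - b‖²`
  have hxb : 0 ≤ (x - b) ⬝ᵥ (x - b) := by simpa using dotProduct_star_self_nonneg (x - b)
  have hexpand : (x - b) ⬝ᵥ (x - b) = x ⬝ᵥ x - 2 * (x ⬝ᵥ b) + b ⬝ᵥ b := by
    simp only [sub_dotProduct, dotProduct_sub, dotProduct_comm b x]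
    ring
  linarith

theorem Matrix.sum_abs_inv_mulVec_le {N : Matrix ι ι ℝ} (hN : (N - 1).PosSemidef)
    {b : ι → ℝ} {c : ℝ} (hc : 0 ≤ c) (hb : ∀ i, |b i| ≤ c) :
    ∑ i, |(N⁻¹ *ᵥ b) i| ≤ Fintype.card ι * c := by
  set x := N⁻¹ *ᵥ b
  have hbb : b ⬝ᵥ b ≤ Fintype.card ι * c ^ 2 :=
    calc b ⬝ᵥ b = ∑ i, |b i| ^ 2 := by simp [dotProduct, sq]
      _ ≤ ∑ _i : ι, c ^ 2 := by gcongr with i; exact hb i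
      _ = Fintype.card ι * c ^ 2 := by simp
  have hsq : (∑ i, |x i|) ^ 2 ≤ (Fintype.card ι * c) ^ 2 :=
    calc (∑ i, |x i|) ^ 2 ≤ Fintype.card ι * ∑ i, |x i| ^ 2 := sq_sum_le_card_mul_sum_sq
      _ = Fintype.card ι * (x ⬝ᵥ x) := by simp [dotProduct, sq]
      _ ≤ Fintype.card ι * (b ⬝ᵥ b) := by gcongr; exact dotProduct_self_inv_mulVec_le hN b
      _ ≤ Fintype.card ι * (Fintype.card ι * c ^ 2) := by gcongr
      _ = (Fintype.card ι * c) ^ 2 := by ring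
  exact (pow_le_pow_iff_left₀ (by positivity) (by positivity) two_ne_zero).mp hsq

end InverseBound

section Submatrix

variable {m n ι α : Type*} [Fintype m] [NonUnitalNonAssocSemiring α]

theorem Matrix.transpose_submatrix_mul_submatrix (C : Matrix m n α) (f : ι → n) :
    (C.submatrix id f)ᵀ * C.submatrix id f = (Cᵀ * C).submatrix f f := by
  rw [submatrix_mul _ _ _ _ _ Function.bijective_id, transpose_submatrix]

theorem Matrix.transpose_submatrix_mulVec_col (C : Matrix m n α) (f : ι → n) (j : n) (i : ι) :
    ((C.submatrix id f)ᵀ *ᵥ fun r => C r j) i = (Cᵀ * C) (f i) j := by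
  simp [mulVec, dotProduct, mul_apply]

end Submatrix

section Laplacian

variable {K : ℕ}

theorem pairDiffMatrix_mul_pairDiffMatrix_eq_zero {k l : Fin K} (hkl : k < l)
    {p : {p : Fin K × Fin K // p.1 < p.2}} (hp : p ≠ ⟨(k, l), hkl⟩) :
    pairDiffMatrix K p k * pairDiffMatrix K p l = 0 := by
  obtain ⟨⟨a, b⟩, hab : a < b⟩ := p
  simp only [pairDiffMatrix, of_apply]
  split_ifs <;> grind

theorem transpose_pairDiffMatrix_mul_diagonal_mul_apply_of_lt
    (w : {p : Fin K × Fin K // p.1 < p.2} → ℝ) {k l : Fin K} (hkl : k < l) :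
    ((pairDiffMatrix K)ᵀ * diagonal w * pairDiffMatrix K) k l = -w ⟨(k, l), hkl⟩ := by
  rw [mul_apply, Fintype.sum_eq_single ⟨(k, l), hkl⟩ fun p hp => by
    rw [mul_diagonal, transpose_apply, mul_right_comm,
      pairDiffMatrix_mul_pairDiffMatrix_eq_zero hkl hp, zero_mul]]
  simp [pairDiffMatrix, hkl.ne']

noncomputable def weightedLaplacian (K : ℕ) (W : Fin K → Fin K → ℝ) : Matrix (Fin K) (Fin K) ℝ :=
  (pairDiffMatrix K)ᵀ * (weightDiagSqrt K W)ᵀ * weightDiagSqrt K W * pairDiffMatrix K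

variable {W : Fin K → Fin K → ℝ}

theorem weightedLaplacian_eq_transpose_mul_self :
    weightedLaplacian K W =
      (weightDiagSqrt K W * pairDiffMatrix K)ᵀ * (weightDiagSqrt K W * pairDiffMatrix K) := by
  simp only [weightedLaplacian, transpose_mul, Matrix.mul_assoc]

theorem weightedLaplacian_posSemidef : (weightedLaplacian K W).PosSemidef := by
  rw [weightedLaplacian_eq_transpose_mul_self, ← conjTranspose_eq_transpose_of_trivial]
  exact posSemidef_conjTranspose_mul_self _

theorem weightedLaplacian_isSymm : (weightedLaplacian K W).IsSymm := by
  simp [weightedLaplacian_eq_transpose_mul_self, IsSymm, transpose_mul]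

theorem weightedLaplacian_apply_of_lt (hW : ∀ k l, 0 ≤ W k l) {k l : Fin K} (hkl : k < l) :
    weightedLaplacian K W k l = -W k l := by
  rw [weightedLaplacian, Matrix.mul_assoc _ (weightDiagSqrt K W)ᵀ, weightDiagSqrt,
    diagonal_transpose, diagonal_mul_diagonal,
    transpose_pairDiffMatrix_mul_diagonal_mul_apply_of_lt _ hkl, Real.mul_self_sqrt (hW k l)]

theorem abs_weightedLaplacian_apply_le (hW : ∀ k l, 0 ≤ W k l) {c : ℝ}
    (hc : ∀ k l, |W k l| ≤ c) {k l : Fin K} (hkl : k ≠ l) :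
    |weightedLaplacian K W k l| ≤ c := by
  rcases hkl.lt_or_gt with h | h
  · rw [weightedLaplacian_apply_of_lt hW h, abs_neg]
    exact hc k l
  · rw [weightedLaplacian_isSymm.apply l k, weightedLaplacian_apply_of_lt hW h, abs_neg]
    exact hc l k

end Laplacian

theorem mutual_incoherency_general
    (K : ℕ) (W : Fin K → Fin K → ℝ)
    (hWpos : ∀ k l, 0 ≤ W k l)
    (Wmax : ℝ) (hWmax : ∀ k l, |W k l| ≤ Wmax)
    (γ : ℝ) (hγ0 : 0 ≤ γ) (hγ : γ < 1 / (2 * K * Wmax))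
    (m : Type) [Fintype m]
    (C : Matrix m (Fin K) ℝ)
    (hC : Cᵀ * C =
      1 + γ • ((pairDiffMatrix K)ᵀ * (weightDiagSqrt K W)ᵀ * (weightDiagSqrt K W) *
        (pairDiffMatrix K)))
    (S : Finset (Fin K)) (j : Fin K) (hj : j ∉ S) :
    ∑ s : {x // x ∈ S},
      |(((C.submatrix id (Subtype.val : {x // x ∈ S} → Fin K))ᵀ *
          (C.submatrix id (Subtype.val : {x // x ∈ S} → Fin K)))⁻¹ *ᵥ
        ((C.submatrix id (Subtype.val : {x // x ∈ S} → Fin K))ᵀ *ᵥ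
          (fun r => C r j))) s| ≤ 1 / 2 := by
  change Cᵀ * C = 1 + γ • weightedLaplacian K W at hC
  set T := C.submatrix id (Subtype.val : {x // x ∈ S} → Fin K)
  have hWmax0 : 0 ≤ Wmax := (abs_nonneg _).trans (hWmax j j)
  have hγK : K * (γ * Wmax) < 1 / 2 := by
    have hpos : 0 < 2 * K * Wmax := by
      by_contra! h
      linarith [one_div_nonpos.mpr h]
    linarith [(lt_div_iff₀ hpos).mp hγ]
  have hN : (Tᵀ * T - 1).PosSemidef := by
    have hsub : Tᵀ * T - 1 = (γ • weightedLaplacian K W).submatrix Subtype.val Subtype.val := by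
      rw [transpose_submatrix_mul_submatrix, hC, ← submatrix_one _ Subtype.val_injective]
      ext
      simp
    rw [hsub]
    exact (weightedLaplacian_posSemidef.smul hγ0).submatrix _
  have hb : ∀ s, |(Tᵀ *ᵥ fun r => C r j) s| ≤ γ * Wmax := by
    intro s
    have hsj : s.val ≠ j := fun h => hj (h ▸ s.2)
    rw [transpose_submatrix_mulVec_col, hC, Matrix.add_apply, one_apply_ne hsj, zero_add,
      Matrix.smul_apply, smul_eq_mul, abs_mul, abs_of_nonneg hγ0]
    exact mul_le_mul_of_nonneg_left (abs_weightedLaplacian_apply_le hWpos hWmax hsj) hγ0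
  have hcard : (Fintype.card {x // x ∈ S} : ℝ) ≤ K := by
    simpa using S.card_le_univ
  calc _ ≤ Fintype.card {x // x ∈ S} * (γ * Wmax) :=
        sum_abs_inv_mulVec_le hN (by positivity) hb
    _ ≤ K * (γ * Wmax) := by gcongr
    _ ≤ 1 / 2 := hγK.le

/-- mutual incoherency, Lemma 3: if `CᵀC = I + γ AᵀGᵀGA` and
`0 ≤ γ < 1/(2K‖W‖_max)`, then for every `S ⊆ {1,…,K}` and `j ∉ S`,
`‖(C_Sᵀ C_S)⁻¹ C_Sᵀ C_j‖₁ ≤ 1/2`. -/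
theorem mutual_incoherency
    (K : ℕ) (W : Fin K → Fin K → ℝ)
    (hWsymm : ∀ k l, W k l = W l k) (hWpos : ∀ k l, 0 ≤ W k l)
    (Wmax : ℝ) (hWmax : ∀ k l, |W k l| ≤ Wmax)
    (γ : ℝ) (hγ0 : 0 ≤ γ) (hγ : γ < 1 / (2 * K * Wmax))
    (m : Type) [Fintype m]
    (C : Matrix m (Fin K) ℝ)
    (hC : Cᵀ * C =
      1 + γ • ((pairDiffMatrix K)ᵀ * (weightDiagSqrt K W)ᵀ * (weightDiagSqrt K W) *
        (pairDiffMatrix K)))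
    (S : Finset (Fin K)) (j : Fin K) (hj : j ∉ S) :
    ∑ s : {x // x ∈ S},
      |(((C.submatrix id (Subtype.val : {x // x ∈ S} → Fin K))ᵀ *
          (C.submatrix id (Subtype.val : {x // x ∈ S} → Fin K)))⁻¹ *ᵥ
        ((C.submatrix id (Subtype.val : {x // x ∈ S} → Fin K))ᵀ *ᵥ
          (fun r => C r j))) s| ≤ 1 / 2 :=
  mutual_incoherency_general K W hWpos Wmax hWmax γ hγ0 hγ m C hC S j hj
end

section
/- Suppose all weights are equal to 1 (W_{kl} = 1 for all l > k) and γ, μ > 0. Fix (i,j) and a vector Θ⋆_ij ∈ ℝ^K with at least one nonzero entry, and let F be the adjugate matrix of B_{S_B:}ᵀ B_{S_B:} ∈ ℝ^{K×K}. Then for every pair of indices u ≠ v with Θ⋆_{u;ij} = Θ⋆_{v;ij}: (i) F_{uu} = F_{vv}; and (ii) F_{uk} = F_{vk} for every index k with k ≠ u and k ≠ v. -/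
/-!
With unit weights, every permutation `σ` of the nodes permutes the rows of `B` up to sign:
it maps the edge row `(k, l)` to the row of the edge `{σ k, σ l}`, reversed when `σ` swaps
the order of its endpoints. If moreover `Θ⋆ ∘ σ = Θ⋆`, this signed row permutation preserves
the support `S_B`, so `B_{S_B:}ᵀ B_{S_B:}` is invariant under simultaneous conjugation by `σ`,
and therefore so is its adjugate `F`. Take for `σ` the transposition of `u` and `v`.
-/

open scoped Classical
open Matrix

/-- The Moore–Penrose pseudoinverse of a real matrix, characterized by the four Penrose
conditions (which determine it uniquely; it always exists for real matrices). -/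
noncomputable def moorePenrose {m n : Type*} [Fintype m] [Fintype n]
    (B : Matrix m n ℝ) : Matrix n m ℝ :=
  if h : ∃ X : Matrix n m ℝ,
      B * X * B = B ∧ X * B * X = X ∧ (B * X)ᵀ = B * X ∧ (X * B)ᵀ = X * B then
    h.choose
  else 0

/-- The matrix `B = [(γ/μ)GA ; I_K]` for `q = 1`. -/
noncomputable def Bmat (K : ℕ) (W : Fin K → Fin K → ℝ) (γ μ : ℝ) :
    Matrix ({p : Fin K × Fin K // p.1 < p.2} ⊕ Fin K) (Fin K) ℝ :=
  Matrix.of fun r c =>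
    match r with
    | Sum.inl p => γ / μ * (W p.val.1 p.val.2 *
        (if c = p.val.1 then 1 else if c = p.val.2 then -1 else 0))
    | Sum.inr k => if c = k then 1 else 0

/-- The support `S_B` of `BΘ⋆`. -/
noncomputable def suppB (K : ℕ) (W : Fin K → Fin K → ℝ) (γ μ : ℝ) (Θ : Fin K → ℝ) :
    Finset ({p : Fin K × Fin K // p.1 < p.2} ⊕ Fin K) :=
  Finset.univ.filter fun r => ((Bmat K W γ μ) *ᵥ Θ) r ≠ 0

/-- The submatrix `B_{S_B:}` of rows of `B` indexed by `S_B`. -/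
noncomputable def BmatS (K : ℕ) (W : Fin K → Fin K → ℝ) (γ μ : ℝ) (Θ : Fin K → ℝ) :
    Matrix {x // x ∈ suppB K W γ μ Θ} (Fin K) ℝ :=
  (Bmat K W γ μ).submatrix Subtype.val id

/-- The sign vector `sign((BΘ⋆)_{S_B})`. -/
noncomputable def signBS (K : ℕ) (W : Fin K → Fin K → ℝ) (γ μ : ℝ) (Θ : Fin K → ℝ) :
    {x // x ∈ suppB K W γ μ Θ} → ℝ :=
  fun r => Real.sign (((Bmat K W γ μ) *ᵥ Θ) r.val)

section SortedPairs

variable {α : Type*} [LinearOrder α]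

def sortPair (σ : Equiv.Perm α) (p : {p : α × α // p.1 < p.2}) : {p : α × α // p.1 < p.2} :=
  ⟨(min (σ p.1.1) (σ p.1.2), max (σ p.1.1) (σ p.1.2)),
    min_lt_max.mpr (σ.injective.ne p.2.ne)⟩

theorem sortPair_inv_sortPair (σ : Equiv.Perm α) (p : {p : α × α // p.1 < p.2}) :
    sortPair σ⁻¹ (sortPair σ p) = p := by
  obtain ⟨⟨a, b⟩, hab⟩ := p
  rcases le_total (σ a) (σ b) with h | h <;>
    simp [sortPair, min_eq_left h, max_eq_right h, min_eq_right h, max_eq_left h, hab.le]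

def sortPairPerm (σ : Equiv.Perm α) : Equiv.Perm {p : α × α // p.1 < p.2} where
  toFun := sortPair σ
  invFun := sortPair σ⁻¹
  left_inv := sortPair_inv_sortPair σ
  right_inv p := by simpa using sortPair_inv_sortPair σ⁻¹ p

def pairSign (R : Type*) [Ring R] (σ : Equiv.Perm α) (p : {p : α × α // p.1 < p.2}) : R :=
  if σ p.1.1 < σ p.1.2 then 1 else -1

/-- The row of the oriented incidence matrix `A` indexed by the edge `p`. -/
def pairIncidence (R : Type*) [Ring R] (p : {p : α × α // p.1 < p.2}) (c : α) : R :=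
  if c = p.1.1 then 1 else if c = p.1.2 then -1 else 0

theorem pairIncidence_sortPair (R : Type*) [Ring R] (σ : Equiv.Perm α)
    (p : {p : α × α // p.1 < p.2}) (c : α) :
    pairIncidence R (sortPair σ p) (σ c) = pairSign R σ p * pairIncidence R p c := by
  obtain ⟨⟨a, b⟩, hab⟩ := p
  rcases lt_or_gt_of_ne (σ.injective.ne hab.ne) with h | h
  · simp [sortPair, pairSign, pairIncidence, min_eq_left h.le, max_eq_right h.le, h]
  · simp only [sortPair, pairSign, pairIncidence, min_eq_right h.le, max_eq_left h.le,
      h.not_gt, if_false, σ.apply_eq_iff_eq]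
    by_cases hca : c = a <;> by_cases hcb : c = b <;> simp_all

end SortedPairs

section SignedRowPermutation

variable {m n R : Type*} [CommRing R]

theorem transpose_mul_self_submatrix_eq_of_signed_perm [Fintype m] (B : Matrix m n R)
    (e : Equiv.Perm m) (σ : Equiv.Perm n) (s : m → R) (hs : ∀ r, s r * s r = 1)
    (hB : ∀ r c, B (e r) (σ c) = s r * B r c) :
    (Bᵀ * B).submatrix σ σ = Bᵀ * B := by
  ext a b
  simp only [submatrix_apply, mul_apply, transpose_apply]
  exact (Fintype.sum_equiv e _ _ fun r => by
    rw [hB, hB, mul_mul_mul_comm, hs, one_mul]).symm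

theorem mulVec_apply_of_signed_perm [Fintype n] (B : Matrix m n R) (e : Equiv.Perm m)
    (σ : Equiv.Perm n) (s : m → R) (hB : ∀ r c, B (e r) (σ c) = s r * B r c)
    (x : n → R) (hx : ∀ c, x (σ c) = x c) (r : m) :
    (B *ᵥ x) (e r) = s r * (B *ᵥ x) r := by
  simp only [mulVec, dotProduct, ← Equiv.sum_comp σ (fun c => B (e r) c * x c), Finset.mul_sum]
  exact Finset.sum_congr rfl fun c _ => by rw [hB, hx, mul_assoc]

end SignedRowPermutation

theorem adjugate_apply_perm_of_submatrix_eq {n R : Type*} [Fintype n] [DecidableEq n]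
    [CommRing R] (M : Matrix n n R) (σ : Equiv.Perm n) (hM : M.submatrix σ σ = M) (a b : n) :
    adjugate M (σ a) (σ b) = adjugate M a b := by
  have h := congrFun₂ (adjugate_submatrix_equiv_self σ M) a b
  rw [hM] at h
  exact h.symm

section Bmat

variable {K : ℕ} {W : Fin K → Fin K → ℝ} {γ μ : ℝ}

def rowPerm (σ : Equiv.Perm (Fin K)) :
    Equiv.Perm ({p : Fin K × Fin K // p.1 < p.2} ⊕ Fin K) :=
  Equiv.sumCongr (sortPairPerm σ) σ

def rowSign (σ : Equiv.Perm (Fin K)) : {p : Fin K × Fin K // p.1 < p.2} ⊕ Fin K → ℝ :=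
  Sum.elim (pairSign ℝ σ) 1

theorem rowSign_mul_self (σ : Equiv.Perm (Fin K))
    (r : {p : Fin K × Fin K // p.1 < p.2} ⊕ Fin K) :
    rowSign σ r * rowSign σ r = 1 := by
  rcases r with p | k
  · simp only [rowSign, Sum.elim_inl, pairSign]
    split_ifs <;> norm_num
  · simp [rowSign]

theorem Bmat_inl (hW : ∀ k l : Fin K, k < l → W k l = 1)
    (p : {p : Fin K × Fin K // p.1 < p.2}) (c : Fin K) :
    Bmat K W γ μ (Sum.inl p) c = γ / μ * pairIncidence ℝ p c := by
  simp [Bmat, pairIncidence, hW _ _ p.2]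

theorem Bmat_rowPerm (hW : ∀ k l : Fin K, k < l → W k l = 1) (σ : Equiv.Perm (Fin K))
    (r : {p : Fin K × Fin K // p.1 < p.2} ⊕ Fin K) (c : Fin K) :
    Bmat K W γ μ (rowPerm σ r) (σ c) = rowSign σ r * Bmat K W γ μ r c := by
  rcases r with p | k
  · simp only [rowPerm, Equiv.sumCongr_apply, Sum.map_inl, rowSign, Sum.elim_inl, Bmat_inl hW]
    rw [sortPairPerm, Equiv.coe_fn_mk, pairIncidence_sortPair]
    ring
  · simp [rowPerm, rowSign, Bmat]

theorem BmatS_transpose_mul_self_submatrix_eq (hW : ∀ k l : Fin K, k < l → W k l = 1)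
    (σ : Equiv.Perm (Fin K)) {Θ : Fin K → ℝ} (hΘ : ∀ c, Θ (σ c) = Θ c) :
    ((BmatS K W γ μ Θ)ᵀ * BmatS K W γ μ Θ).submatrix σ σ =
      (BmatS K W γ μ Θ)ᵀ * BmatS K W γ μ Θ := by
  have hsupp : ∀ r, r ∈ suppB K W γ μ Θ ↔ rowPerm σ r ∈ suppB K W γ μ Θ := fun r => by
    have hs : rowSign σ r ≠ 0 := left_ne_zero_of_mul_eq_one (rowSign_mul_self σ r)
    simp [suppB, mulVec_apply_of_signed_perm _ _ _ _ (Bmat_rowPerm hW σ) Θ hΘ, hs]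
  exact transpose_mul_self_submatrix_eq_of_signed_perm _ ((rowPerm σ).subtypeEquiv hsupp) σ
    (rowSign σ ∘ Subtype.val) (fun r => rowSign_mul_self σ r) fun r c => Bmat_rowPerm hW σ r c

end Bmat

theorem adjugate_symmetries_general
    (K : ℕ) (W : Fin K → Fin K → ℝ)
    (hWone : ∀ k l : Fin K, k < l → W k l = 1)
    (μ γ : ℝ)
    (Θ : Fin K → ℝ) :
    ∀ u v : Fin K, u ≠ v → Θ u = Θ v →
      (Matrix.adjugate ((BmatS K W γ μ Θ)ᵀ * BmatS K W γ μ Θ)) u u =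
        (Matrix.adjugate ((BmatS K W γ μ Θ)ᵀ * BmatS K W γ μ Θ)) v v ∧
      ∀ k : Fin K, k ≠ u → k ≠ v →
        (Matrix.adjugate ((BmatS K W γ μ Θ)ᵀ * BmatS K W γ μ Θ)) u k =
          (Matrix.adjugate ((BmatS K W γ μ Θ)ᵀ * BmatS K W γ μ Θ)) v k := by
  intro u v _ hΘuv
  have hΘ : ∀ c, Θ (Equiv.swap u v c) = Θ c := fun c => by
    rcases eq_or_ne c u with rfl | hcu
    · simp [hΘuv]
    rcases eq_or_ne c v with rfl | hcv
    · simp [hΘuv]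
    · rw [Equiv.swap_apply_of_ne_of_ne hcu hcv]
  have key := adjugate_apply_perm_of_submatrix_eq _ _
    (BmatS_transpose_mul_self_submatrix_eq (γ := γ) (μ := μ) hWone _ hΘ)
  refine ⟨by simpa using (key u u).symm, fun k hku hkv => ?_⟩
  simpa [Equiv.swap_apply_of_ne_of_ne hku hkv] using (key u k).symm

/-- Lemma 4: with all weights equal to 1 and `γ, μ > 0`, let `F` be the
adjugate of `B_{S_B:}ᵀB_{S_B:}`. Then for every `u ≠ v` with `Θ⋆_u = Θ⋆_v`:
(i) `F_uu = F_vv`; (ii) `F_uk = F_vk` for every `k ∉ {u, v}`. -/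
theorem adjugate_symmetries
    (K : ℕ) (W : Fin K → Fin K → ℝ)
    (hWone : ∀ k l : Fin K, k < l → W k l = 1)
    (μ γ : ℝ) (hμ : 0 < μ) (hγ : 0 < γ)
    (Θ : Fin K → ℝ) (hΘ : ∃ k, Θ k ≠ 0) :
    ∀ u v : Fin K, u ≠ v → Θ u = Θ v →
      (Matrix.adjugate ((BmatS K W γ μ Θ)ᵀ * BmatS K W γ μ Θ)) u u =
        (Matrix.adjugate ((BmatS K W γ μ Θ)ᵀ * BmatS K W γ μ Θ)) v v ∧
      ∀ k : Fin K, k ≠ u → k ≠ v →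
        (Matrix.adjugate ((BmatS K W γ μ Θ)ᵀ * BmatS K W γ μ Θ)) u k =
          (Matrix.adjugate ((BmatS K W γ μ Θ)ᵀ * BmatS K W γ μ Θ)) v k :=
  adjugate_symmetries_general K W hWone μ γ Θ
end

section
/- Suppose all weights are equal to 1 (W_{kl} = 1 for all l > k) and γ, μ > 0. Fix (i,j), let Θ⋆_ij ∈ ℝ^K have at least one nonzero entry, and let S = {k : Θ⋆_{k;ij} ≠ 0}. Then for every index u ∈ {1,…,K} with Θ⋆_{u;ij} = 0, the u-th entry of (B_{S_B:}ᵀ B_{S_B:})⁻¹ B_{S_B:}ᵀ sign(B_{S_B:} Θ⋆_ij) equals (1 − μ/γ)·(Σ_{k∈S} sign(Θ⋆_{k;ij}))/|S|; in particular its absolute value is at most |1 − μ/γ|. -/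
open scoped Classical
open Matrix

/-!
The vector `x = (B_Sᵀ B_S)⁻¹ B_Sᵀ σ` is the least-squares solution of `B_S x = σ`, so the residual
`B_S x - σ` is orthogonal to `B_S v` for every `v`. Testing with `v = 1`, which the difference rows
annihilate, gives `∑_{k ∈ S} x_k = ∑_{k ∈ S} sign Θ_k`. Testing with `v = e_u` for `Θ_u = 0`, whose
identity row is not in `S_B`, leaves only the difference rows `(u, l)` with `l ∈ S`, and gives
`(γ/μ) (|S| x_u - ∑_{k ∈ S} x_k) + ∑_{k ∈ S} sign Θ_k = 0`. Solving these two equations yields the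
formula, and the bound follows from `|∑_{k ∈ S} sign Θ_k| ≤ |S|`.
-/

def Matrix.IsLeastSquaresSolution {m n R : Type*} [Fintype m] [Fintype n] [CommRing R]
    (A : Matrix m n R) (b : m → R) (x : n → R) : Prop :=
  ∀ v, (A *ᵥ v) ⬝ᵥ (A *ᵥ x - b) = 0

theorem Real.sign_mul_of_pos {c x : ℝ} (hc : 0 < c) : Real.sign (c * x) = Real.sign x := by
  rcases lt_trichotomy x 0 with h | rfl | h
  · rw [Real.sign_of_neg h, Real.sign_of_neg (mul_neg_of_pos_of_neg hc h)]
  · rw [mul_zero]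
  · rw [Real.sign_of_pos h, Real.sign_of_pos (mul_pos hc h)]

section Pairs

variable {α R : Type*} [Fintype α] [LinearOrder α]

theorem sum_pairs_lt [AddCommMonoid R] (g : α → α → R) :
    ∑ p : {p : α × α // p.1 < p.2}, g p.1.1 p.1.2 = ∑ k, ∑ l, if k < l then g k l else 0 := by
  rw [← Finset.sum_subtype (Finset.univ.filter fun p : α × α => p.1 < p.2) (by simp)
    (fun p => g p.1 p.2), Finset.sum_filter, Fintype.sum_prod_type]

theorem sum_pairs_lt_sub_mul_of_antisymm [CommRing R] [NoZeroDivisors R] [CharZero R]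
    (v : α → R) (F : α → α → R) (hF : ∀ k l, F k l = -F l k) :
    ∑ p : {p : α × α // p.1 < p.2}, (v p.1.1 - v p.1.2) * F p.1.1 p.1.2 =
      ∑ k, ∑ l, v k * F k l := by
  have hsplit : ∀ k l, v k * F k l =
      (if k < l then v k * F k l else 0) + if l < k then v k * F k l else 0 := by
    intro k l
    rcases lt_trichotomy k l with h | rfl | h
    · rw [if_pos h, if_neg h.not_gt, add_zero]
    · simp [self_eq_neg.mp (hF k k)]
    · rw [if_neg h.not_gt, if_pos h, zero_add]
  calc ∑ p : {p : α × α // p.1 < p.2}, (v p.1.1 - v p.1.2) * F p.1.1 p.1.2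
      = ∑ k, ∑ l, ((if k < l then v k * F k l else 0) + if k < l then v l * F l k else 0) := by
        rw [sum_pairs_lt fun k l => (v k - v l) * F k l]
        refine Fintype.sum_congr _ _ fun k => Fintype.sum_congr _ _ fun l => ?_
        split_ifs
        · rw [hF l k]; ring
        · rw [add_zero]
    _ = ∑ k, ∑ l, v k * F k l := by
        simp_rw [Finset.sum_add_distrib]
        rw [Finset.sum_comm (f := fun k l => if k < l then v l * F l k else 0),
          ← Finset.sum_add_distrib]
        refine Fintype.sum_congr _ _ fun k => ?_
        rw [← Finset.sum_add_distrib]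
        exact Fintype.sum_congr _ _ fun l => (hsplit k l).symm

end Pairs

theorem Matrix.isUnit_transpose_mul_self_of_injective {m n R : Type*} [Fintype m] [Fintype n]
    [DecidableEq n] [Field R] [LinearOrder R] [IsStrictOrderedRing R] {A : Matrix m n R}
    (hA : Function.Injective A.mulVec) : IsUnit (Aᵀ * A) := by
  have hker : LinearMap.ker (Aᵀ * A).mulVecLin = ⊥ := by
    rw [ker_mulVecLin_transpose_mul_self]
    exact LinearMap.ker_eq_bot.mpr hA
  exact mulVec_injective_iff_isUnit.mp (LinearMap.ker_eq_bot.mp hker)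

theorem Matrix.isLeastSquaresSolution_gram_inv {m n R : Type*} [Fintype m] [Fintype n]
    [DecidableEq n] [CommRing R] {A : Matrix m n R} (hA : IsUnit (Aᵀ * A)) (b : m → R) :
    A.IsLeastSquaresSolution b ((Aᵀ * A)⁻¹ *ᵥ (Aᵀ *ᵥ b)) := by
  intro v
  have hinv : (Aᵀ * A) * (Aᵀ * A)⁻¹ = 1 := mul_nonsing_inv _ ((isUnit_iff_isUnit_det _).mp hA)
  rw [← vecMul_transpose, ← dotProduct_mulVec, mulVec_sub, mulVec_mulVec, mulVec_mulVec,
    hinv, one_mulVec, sub_self, dotProduct_zero]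

section Bmat

variable {K : ℕ} {W : Fin K → Fin K → ℝ} {γ μ : ℝ} {Θ : Fin K → ℝ}

theorem Bmat_mulVec_inl (v : Fin K → ℝ) (p : {p : Fin K × Fin K // p.1 < p.2}) :
    (Bmat K W γ μ *ᵥ v) (Sum.inl p) = γ / μ * (W p.1.1 p.1.2 * (v p.1.1 - v p.1.2)) := by
  rw [mulVec, dotProduct, Fintype.sum_eq_add p.1.1 p.1.2 p.2.ne fun c hc => by simp [Bmat, hc]]
  simp [Bmat, p.2.ne']
  ring

theorem Bmat_mulVec_inr (v : Fin K → ℝ) (k : Fin K) : (Bmat K W γ μ *ᵥ v) (Sum.inr k) = v k := by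
  simp [Bmat, mulVec, dotProduct]

theorem BmatS_mulVec_apply (v : Fin K → ℝ) (r : suppB K W γ μ Θ) :
    (BmatS K W γ μ Θ *ᵥ v) r = (Bmat K W γ μ *ᵥ v) r.1 :=
  rfl

theorem BmatS_mulVec_injective (hW : ∀ k l, k < l → W k l ≠ 0) (hγ : γ ≠ 0) (hμ : μ ≠ 0)
    (hΘ : ∃ k, Θ k ≠ 0) : Function.Injective (BmatS K W γ μ Θ).mulVec := by
  suffices h : ∀ v, BmatS K W γ μ Θ *ᵥ v = 0 → v = 0 from
    fun a b hab => sub_eq_zero.mp (h _ (by rw [mulVec_sub, hab, sub_self]))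
  intro v hv
  have hsupp : ∀ k, Θ k ≠ 0 → v k = 0 := fun k hk => by
    simpa [BmatS_mulVec_apply, Bmat_mulVec_inr] using
      congrFun hv ⟨Sum.inr k, by simpa [suppB, Bmat_mulVec_inr] using hk⟩
  have hpair : ∀ k l (hkl : k < l), Θ k ≠ Θ l → v k = v l := fun k l hkl hne => by
    have hmem : Sum.inl ⟨(k, l), hkl⟩ ∈ suppB K W γ μ Θ := by
      simpa [suppB, Bmat_mulVec_inl, hγ, hμ, hW k l hkl, sub_eq_zero] using hne
    simpa [BmatS_mulVec_apply, Bmat_mulVec_inl, hγ, hμ, hW k l hkl, sub_eq_zero] using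
      congrFun hv ⟨_, hmem⟩
  obtain ⟨k₀, hk₀⟩ := hΘ
  funext a
  by_cases ha : Θ a = 0
  · have hne : a ≠ k₀ := by rintro rfl; exact hk₀ ha
    rcases hne.lt_or_gt with h | h
    · rw [hpair a k₀ h (by rwa [ha, ne_comm]), hsupp k₀ hk₀, Pi.zero_apply]
    · rw [← hpair k₀ a h (by rwa [ha]), hsupp k₀ hk₀, Pi.zero_apply]
  · exact hsupp a ha

theorem BmatS_mulVec_dotProduct_residual (v x : Fin K → ℝ) :
    (BmatS K W γ μ Θ *ᵥ v) ⬝ᵥ (BmatS K W γ μ Θ *ᵥ x - signBS K W γ μ Θ) =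
      (∑ p, if (Bmat K W γ μ *ᵥ Θ) (Sum.inl p) ≠ 0 then (Bmat K W γ μ *ᵥ v) (Sum.inl p) *
        ((Bmat K W γ μ *ᵥ x) (Sum.inl p) - Real.sign ((Bmat K W γ μ *ᵥ Θ) (Sum.inl p)))
        else 0) +
      ∑ k, if Θ k ≠ 0 then v k * (x k - Real.sign (Θ k)) else 0 := by
  change ∑ r : suppB K W γ μ Θ, (Bmat K W γ μ *ᵥ v) r.1 *
    ((Bmat K W γ μ *ᵥ x) r.1 - Real.sign ((Bmat K W γ μ *ᵥ Θ) r.1)) = _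
  rw [Finset.sum_coe_sort (suppB K W γ μ Θ) fun r => (Bmat K W γ μ *ᵥ v) r *
    ((Bmat K W γ μ *ᵥ x) r - Real.sign ((Bmat K W γ μ *ᵥ Θ) r)), suppB,
    Finset.sum_filter, Fintype.sum_sum_type]
  simp only [Bmat_mulVec_inr]

/-- The contribution of the difference row of `(k, l)` to the `k`-th normal equation, for unit
weights and `c = γ / μ`. -/
noncomputable def pairResidual (c : ℝ) (Θ x : Fin K → ℝ) (k l : Fin K) : ℝ :=
  if Θ k ≠ Θ l then c * (c * (x k - x l) - Real.sign (Θ k - Θ l)) else 0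

theorem pairResidual_swap (c : ℝ) (Θ x : Fin K → ℝ) (k l : Fin K) :
    pairResidual c Θ x k l = -pairResidual c Θ x l k := by
  by_cases h : Θ k = Θ l
  · simp [pairResidual, h]
  · have hsign : Real.sign (Θ l - Θ k) = -Real.sign (Θ k - Θ l) := by
      rw [← Real.sign_neg, neg_sub]
    simp only [pairResidual, if_pos h, if_pos (Ne.symm h), hsign]
    ring

theorem BmatS_mulVec_dotProduct_residual_of_weights_one (hW : ∀ k l, k < l → W k l = 1)
    (hc : 0 < γ / μ) (v x : Fin K → ℝ) :
    (BmatS K W γ μ Θ *ᵥ v) ⬝ᵥ (BmatS K W γ μ Θ *ᵥ x - signBS K W γ μ Θ) =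
      (∑ k, ∑ l, v k * pairResidual (γ / μ) Θ x k l) +
      ∑ k, if Θ k ≠ 0 then v k * (x k - Real.sign (Θ k)) else 0 := by
  rw [BmatS_mulVec_dotProduct_residual,
    ← sum_pairs_lt_sub_mul_of_antisymm v _ (pairResidual_swap (γ / μ) Θ x)]
  congr 1
  refine Fintype.sum_congr _ _ fun p => ?_
  simp only [Bmat_mulVec_inl, hW _ _ p.2, one_mul, Real.sign_mul_of_pos hc, pairResidual, ne_eq,
    mul_eq_zero, hc.ne', sub_eq_zero, false_or]
  split_ifs <;> ring

variable {x : Fin K → ℝ}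

theorem sum_support_eq_sum_sign_of_isLeastSquaresSolution
    (hx : (BmatS K W γ μ Θ).IsLeastSquaresSolution (signBS K W γ μ Θ) x) :
    ∑ k ∈ Finset.univ.filter (Θ · ≠ 0), x k =
      ∑ k ∈ Finset.univ.filter (Θ · ≠ 0), Real.sign (Θ k) := by
  have h := hx 1
  rw [BmatS_mulVec_dotProduct_residual] at h
  rw [← sub_eq_zero, ← Finset.sum_sub_distrib, Finset.sum_filter]
  simpa [Bmat_mulVec_inl] using h

theorem sum_support_sub_add_sign_eq_zero_of_isLeastSquaresSolution
    (hW : ∀ k l, k < l → W k l = 1) (hc : 0 < γ / μ)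
    (hx : (BmatS K W γ μ Θ).IsLeastSquaresSolution (signBS K W γ μ Θ) x) {u : Fin K}
    (hu : Θ u = 0) :
    ∑ k ∈ Finset.univ.filter (Θ · ≠ 0), (γ / μ * (x u - x k) + Real.sign (Θ k)) = 0 := by
  have h := hx (Pi.single u 1)
  rw [BmatS_mulVec_dotProduct_residual_of_weights_one hW hc] at h
  have hrow : ∑ l, pairResidual (γ / μ) Θ x u l =
      γ / μ * ∑ k ∈ Finset.univ.filter (Θ · ≠ 0), (γ / μ * (x u - x k) + Real.sign (Θ k)) := by
    rw [Finset.mul_sum, Finset.sum_filter]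
    refine Fintype.sum_congr _ _ fun l => ?_
    simp only [pairResidual, hu, ne_comm (a := (0 : ℝ)), zero_sub, Real.sign_neg, sub_neg_eq_add]
  have hidentity : ∑ k, (if Θ k ≠ 0 then (Pi.single u 1 : Fin K → ℝ) k *
      (x k - Real.sign (Θ k)) else 0) = 0 :=
    Finset.sum_eq_zero fun k _ => by
      rcases eq_or_ne k u with rfl | hk
      · simp [hu]
      · simp [hk]
  rw [hidentity, add_zero] at h
  simpa [Pi.single_apply, hrow, hc.ne'] using h

end Bmat

theorem abs_mul_sum_sign_div_card_le {ι : Type*} (a : ℝ) (s : Finset ι) (f : ι → ℝ) :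
    |a * (∑ k ∈ s, Real.sign (f k)) / (s.card : ℝ)| ≤ |a| := by
  have hsum : |∑ k ∈ s, Real.sign (f k)| ≤ s.card := by
    refine (Finset.abs_sum_le_sum_abs _ _).trans ?_
    refine (Finset.sum_le_card_nsmul s _ 1 fun k _ => ?_).trans_eq (by simp)
    rcases Real.sign_apply_eq (f k) with h | h | h <;> simp [h]
  rw [abs_div, abs_mul, Nat.abs_cast, mul_div_assoc]
  exact mul_le_of_le_one_right (abs_nonneg a) (div_le_one_of_le₀ hsum (Nat.cast_nonneg _))

/-- with all weights equal to 1 and `γ, μ > 0`, for every `u` with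
`Θ⋆_u = 0`, the `u`-th entry of `(B_{S_B:}ᵀB_{S_B:})⁻¹B_{S_B:}ᵀ sign(B_{S_B:}Θ⋆)` equals
`(1 − μ/γ)·(Σ_{k∈S} sign Θ⋆_k)/|S|`, where `S = supp Θ⋆`; in particular its absolute value
is at most `|1 − μ/γ|`. -/
theorem gram_inverse_entry_formula
    (K : ℕ) (W : Fin K → Fin K → ℝ)
    (hWone : ∀ k l : Fin K, k < l → W k l = 1)
    (μ γ : ℝ) (hμ : 0 < μ) (hγ : 0 < γ)
    (Θ : Fin K → ℝ) (hΘ : ∃ k, Θ k ≠ 0) :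
    ∀ u : Fin K, Θ u = 0 →
      ((((BmatS K W γ μ Θ)ᵀ * BmatS K W γ μ Θ)⁻¹ *ᵥ
          ((BmatS K W γ μ Θ)ᵀ *ᵥ signBS K W γ μ Θ)) u =
        (1 - μ / γ) * (∑ k ∈ Finset.univ.filter (fun k => Θ k ≠ 0), Real.sign (Θ k)) /
          ((Finset.univ.filter (fun k => Θ k ≠ 0)).card : ℝ)) ∧
      |(((BmatS K W γ μ Θ)ᵀ * BmatS K W γ μ Θ)⁻¹ *ᵥ
          ((BmatS K W γ μ Θ)ᵀ *ᵥ signBS K W γ μ Θ)) u| ≤ |1 - μ / γ| := by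
  intro u hu
  have hc : 0 < γ / μ := div_pos hγ hμ
  have hinj := BmatS_mulVec_injective (W := W) (fun k l hkl => by simp [hWone k l hkl])
    hγ.ne' hμ.ne' hΘ
  have hx := Matrix.isLeastSquaresSolution_gram_inv
    (Matrix.isUnit_transpose_mul_self_of_injective hinj) (signBS K W γ μ Θ)
  set x := ((BmatS K W γ μ Θ)ᵀ * BmatS K W γ μ Θ)⁻¹ *ᵥ
    ((BmatS K W γ μ Θ)ᵀ *ᵥ signBS K W γ μ Θ)
  set S := Finset.univ.filter (fun k => Θ k ≠ 0)
  have hsum := sum_support_eq_sum_sign_of_isLeastSquaresSolution hx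
  have hentry := sum_support_sub_add_sign_eq_zero_of_isLeastSquaresSolution hWone hc hx hu
  have hS : (S.card : ℝ) ≠ 0 := by
    obtain ⟨k, hk⟩ := hΘ
    exact_mod_cast (Finset.card_pos.mpr ⟨k, by simpa [S] using hk⟩).ne'
  have hxu : x u = (1 - μ / γ) * (∑ k ∈ S, Real.sign (Θ k)) / (S.card : ℝ) := by
    rw [Finset.sum_add_distrib, ← Finset.mul_sum, Finset.sum_sub_distrib, Finset.sum_const,
      hsum, nsmul_eq_mul] at hentry
    have hγμ : γ / μ * (μ / γ) = 1 := by field_simp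
    rw [eq_div_iff hS]
    linear_combination (μ / γ) * hentry - (S.card * x u - ∑ k ∈ S, Real.sign (Θ k)) * hγμ
  exact ⟨hxu, hxu ▸ abs_mul_sum_sign_div_card_le _ S _⟩
end

section
/- Let M = I_K + γAᵀGᵀGA with q = 2, let C be any matrix with CᵀC = M, and suppose 0 ≤ γ and γ·K·‖W‖_max < 1/2. Then for every subset S ⊆ {1,…,K} and every vector w, the projection residual satisfies ‖C_{S^c}ᵀ (I − C_S(C_Sᵀ C_S)⁻¹C_Sᵀ) w‖_∞ ≤ (1 + K·γ·‖W‖_max)·‖Cᵀ w‖_∞ ≤ (3/2)·‖Cᵀ w‖_∞, where C_S (resp. C_{S^c}) is the submatrix of columns of C indexed by S (resp. its complement) and ‖·‖_∞ on vectors is the maximum absolute entry. -/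
/-!
For `t ∉ S` the `t`-th entry of the residual is `(Cᵀw)_t - ∑_{i ∈ S} M_{ti} v_i` with
`v = (C_SᵀC_S)⁻¹C_Sᵀw`, since `C_tᵀC_S` is the row `t` of `M = CᵀC` restricted to `S`. Off the
diagonal `M = I + γ·AᵀGᵀGA` has entries of size at most `γ‖W‖_max`. As `C_SᵀC_S = I + γ L_S`
with `L = (GA)ᵀ(GA)` positive semidefinite, `v` is no longer than `C_Sᵀw` in `ℓ²`, and the latter
has `ℓ²` norm at most `√K ‖Cᵀw‖_∞`. Cauchy–Schwarz bounds the sum by `Kγ‖W‖_max ‖Cᵀw‖_∞`.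
-/

open scoped Classical
open Matrix

namespace Matrix

variable {m n ι : Type*}

theorem dotProduct_sq_le_dotProduct_self_mul [Fintype ι] (x y : ι → ℝ) :
    (x ⬝ᵥ y) ^ 2 ≤ (x ⬝ᵥ x) * (y ⬝ᵥ y) := by
  simpa only [dotProduct, ← sq] using Finset.sum_mul_sq_le_sq_mul_sq Finset.univ x y

theorem abs_dotProduct_le_card_mul [Fintype ι] {a x y : ι → ℝ} {c U : ℝ} (hc : 0 ≤ c) (hU : 0 ≤ U)
    (ha : ∀ i, |a i| ≤ c) (hy : ∀ i, |y i| ≤ U) (hxy : x ⬝ᵥ x ≤ y ⬝ᵥ y) :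
    |a ⬝ᵥ x| ≤ Fintype.card ι * c * U := by
  have dotProduct_self_le_of_abs_le {z : ι → ℝ} {b : ℝ} (hz : ∀ i, |z i| ≤ b) :
      z ⬝ᵥ z ≤ Fintype.card ι * b ^ 2 := by
    simpa only [dotProduct, ← sq, ← sq_abs (z _), Finset.card_univ, nsmul_eq_mul] using
      Finset.sum_le_card_nsmul Finset.univ _ _ fun i _ => pow_le_pow_left₀ (abs_nonneg _) (hz i) 2
  refine abs_le_of_sq_le_sq ?_ (by positivity)
  calc (a ⬝ᵥ x) ^ 2 ≤ (a ⬝ᵥ a) * (x ⬝ᵥ x) := dotProduct_sq_le_dotProduct_self_mul a x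
    _ ≤ (Fintype.card ι * c ^ 2) * (Fintype.card ι * U ^ 2) :=
      mul_le_mul (dotProduct_self_le_of_abs_le ha) (hxy.trans (dotProduct_self_le_of_abs_le hy))
        (dotProduct_self_star_nonneg x) (by positivity)
    _ = (Fintype.card ι * c * U) ^ 2 := by ring

theorem dotProduct_self_inv_mulVec_le_s14 [Fintype n] [DecidableEq n] {N : Matrix n n ℝ}
    (hN : (N - 1).PosSemidef) (x : n → ℝ) : (N⁻¹ *ᵥ x) ⬝ᵥ (N⁻¹ *ᵥ x) ≤ x ⬝ᵥ x := by
  set v := N⁻¹ *ᵥ x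
  have hNv : N *ᵥ v = x := by
    have hunit : IsUnit N := by simpa using (PosDef.one.add_posSemidef hN).isUnit
    rw [mulVec_mulVec, mul_nonsing_inv _ ((isUnit_iff_isUnit_det N).mp hunit), one_mulVec]
  have hvx : v ⬝ᵥ v ≤ v ⬝ᵥ x := by
    have := hN.dotProduct_mulVec_nonneg v
    simp only [star_trivial, sub_mulVec, one_mulVec, dotProduct_sub, hNv] at this
    linarith
  have hv0 : 0 ≤ v ⬝ᵥ v := dotProduct_self_star_nonneg v
  have hx0 : 0 ≤ x ⬝ᵥ x := dotProduct_self_star_nonneg x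
  nlinarith [dotProduct_sq_le_dotProduct_self_mul v x, mul_le_mul hvx hvx hv0 (hv0.trans hvx)]

theorem transpose_mulVec_sub_submatrix_mulVec [Fintype m] [Fintype ι] (C : Matrix m n ℝ) (f : ι → n)
    (w : m → ℝ) (v : ι → ℝ) :
    Cᵀ *ᵥ (w - C.submatrix id f *ᵥ v) = Cᵀ *ᵥ w - (Cᵀ * C).submatrix id f *ᵥ v := by
  rw [mulVec_sub, mulVec_mulVec, submatrix_mul _ _ _ _ _ Function.bijective_id]
  rfl

theorem PosSemidef.transpose_submatrix_mul_submatrix_sub_one [Fintype m] [DecidableEq n]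
    [DecidableEq ι] {C : Matrix m n ℝ} (hC : (Cᵀ * C - 1).PosSemidef) {f : ι → n}
    (hf : Function.Injective f) :
    ((C.submatrix id f)ᵀ * C.submatrix id f - 1).PosSemidef := by
  rw [transpose_submatrix, ← submatrix_mul _ _ _ _ _ Function.bijective_id, ← submatrix_one _ hf]
  exact hC.submatrix f

end Matrix

noncomputable def pairLaplacian (K : ℕ) (W : Fin K → Fin K → ℝ) : Matrix (Fin K) (Fin K) ℝ :=
  (weightDiagSqrt K W * pairDiffMatrix K)ᵀ * (weightDiagSqrt K W * pairDiffMatrix K)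

section pairLaplacian

variable {K : ℕ} (W : Fin K → Fin K → ℝ)

theorem transpose_mul_mul_eq_pairLaplacian :
    (pairDiffMatrix K)ᵀ * (weightDiagSqrt K W)ᵀ * weightDiagSqrt K W * pairDiffMatrix K =
      pairLaplacian K W := by
  simp only [pairLaplacian, transpose_mul, Matrix.mul_assoc]

theorem pairLaplacian_posSemidef : (pairLaplacian K W).PosSemidef := by
  simpa only [pairLaplacian, conjTranspose_eq_transpose_of_trivial] using
    posSemidef_conjTranspose_mul_self (weightDiagSqrt K W * pairDiffMatrix K)

theorem pairDiffMatrix_apply_mul_apply_of_lt {t l : Fin K} (h : t < l)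
    (p : {p : Fin K × Fin K // p.1 < p.2}) :
    pairDiffMatrix K p t * pairDiffMatrix K p l = if p = ⟨(t, l), h⟩ then -1 else 0 := by
  obtain ⟨⟨a, b⟩, hab⟩ := p
  simp only [pairDiffMatrix, of_apply, Subtype.mk.injEq, Prod.mk.injEq]
  split_ifs <;> grind

theorem pairLaplacian_apply_of_lt {t l : Fin K} (h : t < l) :
    pairLaplacian K W t l = -Real.sqrt (W t l) ^ 2 := by
  have entry (p : {p : Fin K × Fin K // p.1 < p.2}) :
      (weightDiagSqrt K W * pairDiffMatrix K)ᵀ t p * (weightDiagSqrt K W * pairDiffMatrix K) p l =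
        Real.sqrt (W p.1.1 p.1.2) ^ 2 * (pairDiffMatrix K p t * pairDiffMatrix K p l) := by
    simp only [transpose_apply, weightDiagSqrt, diagonal_mul]
    ring
  rw [pairLaplacian, mul_apply]
  simp only [entry, pairDiffMatrix_apply_mul_apply_of_lt h, mul_ite, mul_neg, mul_one, mul_zero,
    Finset.sum_ite_eq', Finset.mem_univ, if_true]

theorem abs_pairLaplacian_apply_le {c : ℝ} (hW : ∀ k l, |W k l| ≤ c) {t l : Fin K}
    (h : t ≠ l) : |pairLaplacian K W t l| ≤ c := by
  wlog hlt : t < l generalizing t l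
  · rw [← (pairLaplacian_posSemidef W).isHermitian.apply, star_trivial]
    exact this h.symm (lt_of_le_of_ne (not_lt.mp hlt) h.symm)
  rw [pairLaplacian_apply_of_lt W hlt, abs_neg, abs_of_nonneg (by positivity)]
  calc Real.sqrt (W t l) ^ 2 ≤ Real.sqrt |W t l| ^ 2 := by
        gcongr; exact le_abs_self _
    _ = |W t l| := Real.sq_sqrt (abs_nonneg _)
    _ ≤ c := hW t l

theorem abs_one_add_smul_pairLaplacian_apply_le {γ c : ℝ} (hγ : 0 ≤ γ) (hW : ∀ k l, |W k l| ≤ c)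
    {t l : Fin K} (h : t ≠ l) : |(1 + γ • pairLaplacian K W) t l| ≤ γ * c := by
  rw [Matrix.add_apply, one_apply_ne h, zero_add, Matrix.smul_apply, smul_eq_mul, abs_mul,
    abs_of_nonneg hγ]
  exact mul_le_mul_of_nonneg_left (abs_pairLaplacian_apply_le W hW h) hγ

end pairLaplacian

theorem projection_residual_bound_general
    (K : ℕ) (W : Fin K → Fin K → ℝ)
    (Wmax : ℝ) (hWmax : ∀ k l, |W k l| ≤ Wmax)
    (γ : ℝ) (hγ0 : 0 ≤ γ) (hγ : γ * K * Wmax < 1 / 2)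
    (m : Type) [Fintype m]
    (C : Matrix m (Fin K) ℝ)
    (hC : Cᵀ * C =
      1 + γ • ((pairDiffMatrix K)ᵀ * (weightDiagSqrt K W)ᵀ * (weightDiagSqrt K W) *
        (pairDiffMatrix K)))
    (S : Finset (Fin K)) (w : m → ℝ) :
    (∀ t : Fin K, t ∉ S →
      |∑ a : m, C a t *
          (w - (C.submatrix id (Subtype.val : {x // x ∈ S} → Fin K)) *ᵥ
            (((C.submatrix id (Subtype.val : {x // x ∈ S} → Fin K))ᵀ *
                (C.submatrix id (Subtype.val : {x // x ∈ S} → Fin K)))⁻¹ *ᵥ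
              ((C.submatrix id (Subtype.val : {x // x ∈ S} → Fin K))ᵀ *ᵥ w))) a| ≤
        (1 + K * γ * Wmax) * ⨆ k : Fin K, |(Cᵀ *ᵥ w) k|) ∧
    (1 + K * γ * Wmax) * (⨆ k : Fin K, |(Cᵀ *ᵥ w) k|) ≤
      (3 / 2) * ⨆ k : Fin K, |(Cᵀ *ᵥ w) k| := by
  rw [transpose_mul_mul_eq_pairLaplacian] at hC
  set B := C.submatrix id (Subtype.val : {x // x ∈ S} → Fin K)
  set v := (Bᵀ * B)⁻¹ *ᵥ (Bᵀ *ᵥ w)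
  set U := ⨆ k : Fin K, |(Cᵀ *ᵥ w) k|
  have hU (k : Fin K) : |(Cᵀ *ᵥ w) k| ≤ U :=
    le_ciSup (f := fun k => |(Cᵀ *ᵥ w) k|) (Finite.bddAbove_range _) k
  have hU0 : 0 ≤ U := Real.iSup_nonneg fun k => abs_nonneg _
  refine ⟨fun t ht => ?_, by gcongr; linarith⟩
  have hWmax0 : 0 ≤ Wmax := (abs_nonneg _).trans (hWmax t t)
  have hgram : (Bᵀ * B - 1).PosSemidef := by
    refine PosSemidef.transpose_submatrix_mul_submatrix_sub_one ?_ Subtype.val_injective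
    rw [hC, add_sub_cancel_left]
    exact (pairLaplacian_posSemidef W).smul hγ0
  have hoff (i : {x // x ∈ S}) : |(Cᵀ * C) t i| ≤ γ * Wmax :=
    hC ▸ abs_one_add_smul_pairLaplacian_apply_le W hγ0 hWmax fun h => ht (h ▸ i.2)
  have hcard : (Fintype.card {x // x ∈ S} : ℝ) ≤ K :=
    mod_cast (Fintype.card_coe S).trans_le ((Finset.card_le_univ S).trans_eq (Fintype.card_fin K))
  calc _ = |(Cᵀ *ᵥ w) t - (fun i : {x // x ∈ S} => (Cᵀ * C) t i) ⬝ᵥ v| :=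
        congrArg abs (congrFun (transpose_mulVec_sub_submatrix_mulVec C _ w v) t)
    _ ≤ |(Cᵀ *ᵥ w) t| + |(fun i : {x // x ∈ S} => (Cᵀ * C) t i) ⬝ᵥ v| := abs_sub _ _
    _ ≤ U + Fintype.card {x // x ∈ S} * (γ * Wmax) * U :=
        add_le_add (hU t) (abs_dotProduct_le_card_mul (by positivity) hU0 hoff (fun i => hU i)
          (dotProduct_self_inv_mulVec_le_s14 hgram _))
    _ ≤ (1 + K * γ * Wmax) * U := by nlinarith [mul_nonneg (mul_nonneg hγ0 hWmax0) hU0]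

/-- for `M = I + γAᵀGᵀGA` (q = 2), `CᵀC = M`, `0 ≤ γ` and `γK‖W‖_max < 1/2`,
the projection residual satisfies
`‖C_{Sᶜ}ᵀ(I − C_S(C_SᵀC_S)⁻¹C_Sᵀ)w‖_∞ ≤ (1 + Kγ‖W‖_max)‖Cᵀw‖_∞ ≤ (3/2)‖Cᵀw‖_∞`. -/
theorem projection_residual_bound
    (K : ℕ) (W : Fin K → Fin K → ℝ)
    (hWsymm : ∀ k l, W k l = W l k) (hWpos : ∀ k l, 0 ≤ W k l)
    (Wmax : ℝ) (hWmax : ∀ k l, |W k l| ≤ Wmax)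
    (γ : ℝ) (hγ0 : 0 ≤ γ) (hγ : γ * K * Wmax < 1 / 2)
    (m : Type) [Fintype m]
    (C : Matrix m (Fin K) ℝ)
    (hC : Cᵀ * C =
      1 + γ • ((pairDiffMatrix K)ᵀ * (weightDiagSqrt K W)ᵀ * (weightDiagSqrt K W) *
        (pairDiffMatrix K)))
    (S : Finset (Fin K)) (w : m → ℝ) :
    (∀ t : Fin K, t ∉ S →
      |∑ a : m, C a t *
          (w - (C.submatrix id (Subtype.val : {x // x ∈ S} → Fin K)) *ᵥ
            (((C.submatrix id (Subtype.val : {x // x ∈ S} → Fin K))ᵀ *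
                (C.submatrix id (Subtype.val : {x // x ∈ S} → Fin K)))⁻¹ *ᵥ
              ((C.submatrix id (Subtype.val : {x // x ∈ S} → Fin K))ᵀ *ᵥ w))) a| ≤
        (1 + K * γ * Wmax) * ⨆ k : Fin K, |(Cᵀ *ᵥ w) k|) ∧
    (1 + K * γ * Wmax) * (⨆ k : Fin K, |(Cᵀ *ᵥ w) k|) ≤
      (3 / 2) * ⨆ k : Fin K, |(Cᵀ *ᵥ w) k| :=
  projection_residual_bound_general K W Wmax hWmax γ hγ0 hγ m C hC S w
end
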